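/- arXiv:2605.12171 — 4 statements merged into one kernel-verified Lean document; each statement's English description precedes it below -/
import Mathlib

section
/- Let T : {0,1}ⁿ → ℝ be of the form T(x) = u(A₁(x) + ⋯ + A_h(x)), where each Aⱼ is a self-attention head with value-embedding dimension d, and u = P/Q is a rational function on ℝᵈ of degree at most p whose denominator Q is nonzero at every attained head-sum. Then there exist polynomials P̃, Q̃ in n real variables, each of total degree at most 2hp, with Q̃ nonzero on {0,1}ⁿ, such that T(x) = P̃(x)/Q̃(x) for all x ∈ {0,1}ⁿ. -/
/-- The Boolean hypercube `{0,1}ⁿ` inside `ℝⁿ`. -/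
def cube (n : ℕ) : Set (Fin n → ℝ) := {x | ∀ i, x i = 0 ∨ x i = 1}

/-- `A` is a self-attention head on binary inputs of length `n+1` with
value-embedding dimension `d`, reading the query from the last token. -/
def IsAttentionHead {n d : ℕ} (A : (Fin (n + 1) → ℝ) → Fin d → ℝ) : Prop :=
  ∃ (H : Type) (_ : NormedAddCommGroup H) (_ : InnerProductSpace ℝ H)
    (q : ℝ → H) (k : Fin (n + 1) → ℝ → H) (v : Fin (n + 1) → ℝ → Fin d → ℝ),
    ∀ x j, A x j =
      (∑ i, Real.exp (inner ℝ (q (x (Fin.last n))) (k i (x i)) : ℝ) * v i (x i) j) /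
      (∑ i, Real.exp (inner ℝ (q (x (Fin.last n))) (k i (x i)) : ℝ))

/-!
On the cube every coordinate is `0` or `1`, so a function of two coordinates (the key `xᵢ`
and the query `xₙ`) agrees there with a polynomial of degree `≤ 2`. Hence each head is a
quotient of degree-`2` polynomials with nonvanishing denominator, the sum of `h` heads is
such a quotient of degree `2h` over the common denominator `D`, and clearing denominators
in `P(N/D) / Q(N/D)` by multiplying both by `Dᵖ` gives degree `2hp`.
-/

open MvPolynomial Finset

section Interpolation

variable {R σ : Type*} [CommRing R]

theorem totalDegree_X_le (i : σ) : (X i : MvPolynomial σ R).totalDegree ≤ 1 := by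
  rcases subsingleton_or_nontrivial R with hR | hR
  · simp [Subsingleton.elim (X i : MvPolynomial σ R) 0]
  · exact (totalDegree_X i).le

theorem exists_totalDegree_le_one_eval_eq (i : σ) (g : R → R) :
    ∃ q : MvPolynomial σ R, q.totalDegree ≤ 1 ∧
      ∀ x : σ → R, (x i = 0 ∨ x i = 1) → eval x q = g (x i) := by
  refine ⟨C (g 0) + (g 1 - g 0) • X i, ?_, ?_⟩
  · refine (totalDegree_add _ _).trans (max_le (by simp) ?_)
    exact (totalDegree_smul_le _ _).trans (totalDegree_X_le i)
  · rintro x (hx | hx) <;> simp [hx]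

theorem exists_totalDegree_le_two_eval_eq (i j : σ) (f : R → R → R) :
    ∃ q : MvPolynomial σ R, q.totalDegree ≤ 2 ∧
      ∀ x : σ → R, (x i = 0 ∨ x i = 1) → (x j = 0 ∨ x j = 1) → eval x q = f (x i) (x j) := by
  obtain ⟨a, ha, ha_eval⟩ := exists_totalDegree_le_one_eval_eq j (f 0)
  obtain ⟨b, hb, hb_eval⟩ := exists_totalDegree_le_one_eval_eq j fun t => f 1 t - f 0 t
  refine ⟨a + b * X i, ?_, ?_⟩
  · refine (totalDegree_add _ _).trans (max_le (ha.trans one_le_two) ?_)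
    exact (totalDegree_mul _ _).trans (add_le_add hb (totalDegree_X_le i))
  · rintro x (hx | hx) hxj <;> simp [hx, ha_eval x hxj, hb_eval x hxj]

end Interpolation

section Fraction

variable {K σ ι : Type*} [Field K]

def IsPolyFractionOn (S : Set (σ → K)) (k : ℕ) (F : (σ → K) → ι → K) : Prop :=
  ∃ (D : MvPolynomial σ K) (N : ι → MvPolynomial σ K),
    D.totalDegree ≤ k ∧ (∀ m, (N m).totalDegree ≤ k) ∧ (∀ x ∈ S, eval x D ≠ 0) ∧
      ∀ x ∈ S, ∀ m, F x m = eval x (N m) / eval x D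

namespace IsPolyFractionOn

variable {S : Set (σ → K)} {k l : ℕ}

theorem zero : IsPolyFractionOn S 0 (0 : (σ → K) → ι → K) :=
  ⟨1, 0, by simp, by simp, by simp, by simp⟩

theorem add {F G : (σ → K) → ι → K} (hF : IsPolyFractionOn S k F)
    (hG : IsPolyFractionOn S l G) : IsPolyFractionOn S (k + l) (F + G) := by
  obtain ⟨D, N, hD, hN, hD0, hF⟩ := hF
  obtain ⟨E, M, hE, hM, hE0, hG⟩ := hG
  refine ⟨D * E, fun m => N m * E + D * M m, ?_, fun m => ?_, fun x hx => ?_, fun x hx m => ?_⟩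
  · exact (totalDegree_mul D E).trans (add_le_add hD hE)
  · refine (totalDegree_add _ _).trans (max_le ?_ ?_)
    · exact (totalDegree_mul _ _).trans (add_le_add (hN m) hE)
    · exact (totalDegree_mul _ _).trans (add_le_add hD (hM m))
  · simpa using mul_ne_zero (hD0 x hx) (hE0 x hx)
  · simp only [Pi.add_apply, hF x hx, hG x hx, map_add, map_mul]
    rw [div_add_div _ _ (hD0 x hx) (hE0 x hx)]

theorem sum {J : Type*} {F : J → (σ → K) → ι → K} (s : Finset J)
    (hF : ∀ j ∈ s, IsPolyFractionOn S k (F j)) :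
    IsPolyFractionOn S (k * #s) (∑ j ∈ s, F j) := by
  classical
  induction s using Finset.induction_on with
  | empty => simpa using zero
  | insert j s hj ih =>
    rw [sum_insert hj, card_insert_of_notMem hj, mul_add_one, Nat.add_comm (k * _)]
    exact (hF j (mem_insert_self j s)).add (ih fun j' hj' => hF j' (mem_insert_of_mem hj'))

end IsPolyFractionOn

theorem pow_mul_prod_div_pow {c : K} (hc : c ≠ 0) {ι : Type*} (s : Finset ι) (y : ι → K)
    (α : ι → ℕ) {p : ℕ} (hα : ∑ m ∈ s, α m ≤ p) :
    c ^ p * ∏ m ∈ s, (y m / c) ^ α m = (∏ m ∈ s, y m ^ α m) * c ^ (p - ∑ m ∈ s, α m) := by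
  conv_lhs => rw [← Nat.sub_add_cancel hα, pow_add]
  simp only [div_pow, prod_div_distrib, prod_pow_eq_pow_sum]
  field_simp

theorem exists_totalDegree_le_eval_eq_pow_mul_eval_div [Fintype ι] (P : MvPolynomial ι K)
    {p k : ℕ} (hP : P.totalDegree ≤ p) (D : MvPolynomial σ K) (N : ι → MvPolynomial σ K)
    (hD : D.totalDegree ≤ k) (hN : ∀ m, (N m).totalDegree ≤ k) :
    ∃ P' : MvPolynomial σ K, P'.totalDegree ≤ k * p ∧ ∀ x, eval x D ≠ 0 →
      eval x P' = eval x D ^ p * eval (fun m => eval x (N m) / eval x D) P := by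
  have hα : ∀ α ∈ P.support, ∑ m, α m ≤ p := fun α hα =>
    (Finsupp.sum_fintype α (fun _ e => e) fun _ => rfl) ▸ (le_totalDegree hα).trans hP
  refine ⟨∑ α ∈ P.support, P.coeff α • ((∏ m, N m ^ α m) * D ^ (p - ∑ m, α m)), ?_, ?_⟩
  · refine totalDegree_finsetSum_le fun α hαP => (totalDegree_smul_le _ _).trans ?_
    have hprod : (∏ m, N m ^ α m).totalDegree ≤ ∑ m, α m * k :=
      (totalDegree_finsetProd _ _).trans <| sum_le_sum fun m _ =>
        (totalDegree_pow _ _).trans (Nat.mul_le_mul_left _ (hN m))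
    calc _ ≤ (∏ m, N m ^ α m).totalDegree + (D ^ (p - ∑ m, α m)).totalDegree :=
          totalDegree_mul _ _
      _ ≤ ∑ m, α m * k + (p - ∑ m, α m) * k :=
          add_le_add hprod ((totalDegree_pow _ _).trans (Nat.mul_le_mul_left _ hD))
      _ = k * p := by rw [← sum_mul, ← add_mul, Nat.add_sub_cancel' (hα α hαP), mul_comm]
  · intro x hx
    rw [map_sum, eval_eq' _ P, mul_sum]
    refine sum_congr rfl fun α hαP => ?_
    simp only [smul_eval, map_mul, map_pow, map_prod]
    rw [mul_left_comm (eval x D ^ p), pow_mul_prod_div_pow hx _ _ _ (hα α hαP)]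

end Fraction

theorem IsAttentionHead.isPolyFractionOn {n d : ℕ} {A : (Fin (n + 1) → ℝ) → Fin d → ℝ}
    (hA : IsAttentionHead A) : IsPolyFractionOn (cube (n + 1)) 2 A := by
  obtain ⟨H, _, _, q, k, v, hA⟩ := hA
  choose e he he_eval using fun i => exists_totalDegree_le_two_eval_eq i (Fin.last n)
    fun a b => Real.exp (inner ℝ (q b) (k i a))
  choose f hf hf_eval using fun i m => exists_totalDegree_le_two_eval_eq i (Fin.last n)
    fun a b => Real.exp (inner ℝ (q b) (k i a)) * v i a m
  refine ⟨∑ i, e i, fun m => ∑ i, f i m, totalDegree_finsetSum_le fun i _ => he i,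
    fun m => totalDegree_finsetSum_le fun i _ => hf i m, fun x hx => ?_, fun x hx m => ?_⟩
  · simp only [map_sum, he_eval _ x (hx _) (hx _)]
    exact (sum_pos (fun i _ => Real.exp_pos _) univ_nonempty).ne'
  · simp only [hA, map_sum, he_eval _ x (hx _) (hx _), hf_eval _ _ x (hx _) (hx _)]

theorem stmt_7 (n d h p : ℕ) (A : Fin h → (Fin (n + 1) → ℝ) → Fin d → ℝ)
    (hA : ∀ j, IsAttentionHead (A j))
    (P Q : MvPolynomial (Fin d) ℝ)
    (hP : P.totalDegree ≤ p) (hQ : Q.totalDegree ≤ p)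
    (hQne : ∀ x ∈ cube (n + 1), MvPolynomial.eval (∑ j, A j x) Q ≠ 0)
    (T : (Fin (n + 1) → ℝ) → ℝ)
    (hT : ∀ x ∈ cube (n + 1),
      T x = MvPolynomial.eval (∑ j, A j x) P / MvPolynomial.eval (∑ j, A j x) Q) :
    ∃ P' Q' : MvPolynomial (Fin (n + 1)) ℝ,
      P'.totalDegree ≤ 2 * h * p ∧ Q'.totalDegree ≤ 2 * h * p ∧
      (∀ x ∈ cube (n + 1), MvPolynomial.eval x Q' ≠ 0) ∧
      ∀ x ∈ cube (n + 1), T x = MvPolynomial.eval x P' / MvPolynomial.eval x Q' := by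
  obtain ⟨D, N, hD, hN, hD0, hsum⟩ : IsPolyFractionOn (cube (n + 1)) (2 * h) (∑ j, A j) := by
    simpa using IsPolyFractionOn.sum univ fun j _ => (hA j).isPolyFractionOn
  have hsum_eq : ∀ x ∈ cube (n + 1), (fun m => eval x (N m) / eval x D) = ∑ j, A j x :=
    fun x hx => funext fun m => by rw [← hsum x hx m, Finset.sum_apply]
  obtain ⟨P', hP'deg, hP'⟩ := exists_totalDegree_le_eval_eq_pow_mul_eval_div P hP D N hD hN
  obtain ⟨Q', hQ'deg, hQ'⟩ := exists_totalDegree_le_eval_eq_pow_mul_eval_div Q hQ D N hD hN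
  refine ⟨P', Q', hP'deg, hQ'deg, fun x hx => ?_, fun x hx => ?_⟩
  · rw [hQ' x (hD0 x hx), hsum_eq x hx]
    exact mul_ne_zero (pow_ne_zero _ (hD0 x hx)) (hQne x hx)
  · rw [hT x hx, hP' x (hD0 x hx), hQ' x (hD0 x hx), hsum_eq x hx,
      mul_div_mul_left _ _ (pow_ne_zero _ (hD0 x hx))]
end

section
/- Suppose every rational function P/Q (with Q nonzero on {0,1}ⁿ) that sign-represents the parity function on n bits satisfies deg(P) + deg(Q) ≥ n. Let T be a self-attention layer with h heads and value-embedding dimension d post-processed by a rational function of degree at most p, with denominator nonzero on all attained head-sums. If T sign-represents parity on {0,1}ⁿ, then h·p ≥ n/4. -/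
open scoped Classical

/-- Parity of a point of the cube: its Hamming weight is odd. -/
noncomputable def parity {n : ℕ} (x : Fin n → ℝ) : Prop :=
  Odd (Finset.univ.filter fun i => x i = 1).card

/-- `f` sign-represents `g` on the cube. -/
def SignRep {n : ℕ} (f : (Fin n → ℝ) → ℝ) (g : (Fin n → ℝ) → Prop) : Prop :=
  ∀ x ∈ cube n, (0 < f x ↔ g x)

/-!
On the cube a function of two bits is a polynomial of degree `≤ 2`. The attention weights and
weighted values of a head only see the bit at their own position and the last (query) bit, so
each head is a ratio of degree-`2` polynomials whose denominator, a sum of exponentials, never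
vanishes. Over a common denominator the `h` heads sum to a ratio of degree `2h`; substituting
it into `P / Q` and multiplying numerator and denominator by the `p`-th power of that common
denominator gives a rational sign-representation of parity of degree at most `2hp + 2hp`,
so Paturi–Saks forces `n + 1 ≤ 4hp`.
-/

open MvPolynomial

theorem exists_totalDegree_le_two_eval_eq_on_cube {m : ℕ} (i j : Fin m) (g : ℝ → ℝ → ℝ) :
    ∃ E : MvPolynomial (Fin m) ℝ, E.totalDegree ≤ 2 ∧
      ∀ x ∈ cube m, eval x E = g (x i) (x j) := by
  have hX : ∀ a, (X a : MvPolynomial (Fin m) ℝ) ∈ restrictTotalDegree (Fin m) ℝ 2 := fun a => by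
    simp [mem_restrictTotalDegree, totalDegree_X]
  have hXX : X i * X j ∈ restrictTotalDegree (Fin m) ℝ 2 := by
    rw [mem_restrictTotalDegree]
    exact (totalDegree_mul _ _).trans (by simp [totalDegree_X])
  have h1 : (1 : MvPolynomial (Fin m) ℝ) ∈ restrictTotalDegree (Fin m) ℝ 2 := by
    simp [mem_restrictTotalDegree]
  refine ⟨g 0 0 • 1 + (g 1 0 - g 0 0) • X i + (g 0 1 - g 0 0) • X j
      + (g 1 1 - g 1 0 - g 0 1 + g 0 0) • (X i * X j), ?_, ?_⟩
  · rw [← mem_restrictTotalDegree]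
    refine add_mem (add_mem (add_mem ?_ ?_) ?_) ?_ <;> apply Submodule.smul_mem
    exacts [h1, hX i, hX j, hXX]
  · intro x hx
    rcases hx i with hi | hi <;> rcases hx j with hj | hj <;> simp [hi, hj]; ring

section RationalRepresentation

variable {K σ ι : Type*} [Field K]

def RatRepOn (s : Set (σ → K)) (e : ℕ) (f : (σ → K) → ι → K) : Prop :=
  ∃ (N : ι → MvPolynomial σ K) (D : MvPolynomial σ K),
    (∀ k, (N k).totalDegree ≤ e) ∧ D.totalDegree ≤ e ∧
      ∀ x ∈ s, eval x D ≠ 0 ∧ ∀ k, f x k = eval x (N k) / eval x D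

variable {s : Set (σ → K)}

theorem RatRepOn.zero : RatRepOn s 0 (0 : (σ → K) → ι → K) :=
  ⟨0, 1, by simp, by simp, by simp⟩

theorem RatRepOn.add {e e' : ℕ} {f g : (σ → K) → ι → K} (hf : RatRepOn s e f)
    (hg : RatRepOn s e' g) : RatRepOn s (e + e') (f + g) := by
  obtain ⟨N, D, hN, hD, hfx⟩ := hf
  obtain ⟨N', D', hN', hD', hgx⟩ := hg
  refine ⟨fun k => N k * D' + D * N' k, D * D', fun k => ?_,
    (totalDegree_mul _ _).trans (add_le_add hD hD'), fun x hx => ?_⟩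
  · refine (totalDegree_add _ _).trans (max_le ?_ ?_) <;> refine (totalDegree_mul _ _).trans ?_
    exacts [add_le_add (hN k) hD', add_le_add hD (hN' k)]
  · obtain ⟨hDx, hfx⟩ := hfx x hx
    obtain ⟨hD'x, hgx⟩ := hgx x hx
    refine ⟨by simpa using mul_ne_zero hDx hD'x, fun k => ?_⟩
    simp only [Pi.add_apply, hfx, hgx, map_add, map_mul, div_add_div _ _ hDx hD'x]

theorem RatRepOn.sum {e : ℕ} {α : Type*} {t : Finset α} {f : α → (σ → K) → ι → K}
    (hf : ∀ j ∈ t, RatRepOn s e (f j)) : RatRepOn s (t.card * e) (∑ j ∈ t, f j) := by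
  induction t using Finset.cons_induction with
  | empty => simpa using RatRepOn.zero
  | cons a t ha ih =>
    rw [Finset.sum_cons, Finset.card_cons, add_one_mul, add_comm]
    exact (hf a (Finset.mem_cons_self a t)).add
      (ih fun j hj => hf j (Finset.mem_cons_of_mem hj))

noncomputable def clearDenoms (P : MvPolynomial ι K) (p : ℕ) (N : ι → MvPolynomial σ K)
    (D : MvPolynomial σ K) : MvPolynomial σ K :=
  ∑ m ∈ P.support, C (coeff m P) * D ^ (p - m.degree) * m.prod fun k a => N k ^ a

variable {P : MvPolynomial ι K} {p e : ℕ} {N : ι → MvPolynomial σ K} {D : MvPolynomial σ K}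

theorem totalDegree_clearDenoms_le (hP : P.totalDegree ≤ p) (hN : ∀ k, (N k).totalDegree ≤ e)
    (hD : D.totalDegree ≤ e) : (clearDenoms P p N D).totalDegree ≤ p * e := by
  refine (totalDegree_finsetSum _ _).trans (Finset.sup_le fun m hm => ?_)
  have hm : m.degree ≤ p := (le_totalDegree hm).trans hP
  calc _ ≤ 0 + (p - m.degree) * e + ∑ k ∈ m.support, m k * e := by
        refine (totalDegree_mul _ _).trans (add_le_add ((totalDegree_mul _ _).trans
          (add_le_add (totalDegree_C _).le ((totalDegree_pow _ _).trans
            (Nat.mul_le_mul_left _ hD)))) ?_)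
        refine (totalDegree_finsetProd _ _).trans (Finset.sum_le_sum fun k _ => ?_)
        exact (totalDegree_pow _ _).trans (Nat.mul_le_mul_left _ (hN k))
    _ = p * e := by
        rw [zero_add, ← Finset.sum_mul, ← add_mul, ← Finsupp.degree_apply, Nat.sub_add_cancel hm]

theorem eval_clearDenoms (hP : P.totalDegree ≤ p) {x : σ → K} (hx : eval x D ≠ 0) :
    eval x (clearDenoms P p N D) = eval x D ^ p * eval (fun k => eval x (N k) / eval x D) P := by
  rw [clearDenoms, map_sum, eval_eq _ P, Finset.mul_sum]
  refine Finset.sum_congr rfl fun m hm => ?_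
  have hm : m.degree ≤ p := (le_totalDegree hm).trans hP
  simp only [map_mul, eval_C, map_pow, Finsupp.prod, map_prod, div_pow, Finset.prod_div_distrib,
    Finset.prod_pow_eq_pow_sum, ← Finsupp.degree_apply, pow_sub₀ _ hx hm]
  field_simp

theorem RatRepOn.exists_div_eq_comp_div {F : (σ → K) → ι → K}
    (hF : RatRepOn s e F) {P Q : MvPolynomial ι K} (hP : P.totalDegree ≤ p)
    (hQ : Q.totalDegree ≤ p) (hQF : ∀ x ∈ s, eval (F x) Q ≠ 0) :
    ∃ P' Q' : MvPolynomial σ K, P'.totalDegree ≤ p * e ∧ Q'.totalDegree ≤ p * e ∧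
      ∀ x ∈ s, eval x Q' ≠ 0 ∧ eval x P' / eval x Q' = eval (F x) P / eval (F x) Q := by
  obtain ⟨N, D, hN, hD, hFx⟩ := hF
  refine ⟨clearDenoms P p N D, clearDenoms Q p N D, totalDegree_clearDenoms_le hP hN hD,
    totalDegree_clearDenoms_le hQ hN hD, fun x hx => ?_⟩
  obtain ⟨hDx, hFx⟩ := hFx x hx
  have hFx : F x = fun k => eval x (N k) / eval x D := funext hFx
  rw [eval_clearDenoms hP hDx, eval_clearDenoms hQ hDx, ← hFx]
  exact ⟨mul_ne_zero (pow_ne_zero _ hDx) (hQF x hx),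
    mul_div_mul_left _ _ (pow_ne_zero _ hDx)⟩

end RationalRepresentation

theorem IsAttentionHead.ratRepOn_cube {n d : ℕ} {A : (Fin (n + 1) → ℝ) → Fin d → ℝ}
    (hA : IsAttentionHead A) : RatRepOn (cube (n + 1)) 2 A := by
  obtain ⟨H, _, _, q, k, v, hA⟩ := hA
  -- the `i`-th attention weight and weighted value depend only on the bits `x i` and `x (last n)`
  choose E hEdeg hE using fun i : Fin (n + 1) =>
    exists_totalDegree_le_two_eval_eq_on_cube i (Fin.last n)
      fun a b => Real.exp (inner ℝ (q b) (k i a))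
  choose F hFdeg hF using fun (i : Fin (n + 1)) (c : Fin d) =>
    exists_totalDegree_le_two_eval_eq_on_cube i (Fin.last n)
      fun a b => Real.exp (inner ℝ (q b) (k i a)) * v i a c
  refine ⟨fun c => ∑ i, F i c, ∑ i, E i,
    fun c => (totalDegree_finsetSum _ _).trans (Finset.sup_le fun i _ => hFdeg i c),
    (totalDegree_finsetSum _ _).trans (Finset.sup_le fun i _ => hEdeg i), fun x hx => ?_⟩
  simp only [map_sum, hE _ x hx, hF _ _ x hx]
  exact ⟨(Finset.sum_pos (fun i _ => Real.exp_pos _) Finset.univ_nonempty).ne', hA x⟩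

theorem stmt_10 (n d h p : ℕ)
    -- Paturi–Saks degree lower bound for rational sign-representations of parity:
    (hPS : ∀ P Q : MvPolynomial (Fin (n + 1)) ℝ,
      (∀ x ∈ cube (n + 1), MvPolynomial.eval x Q ≠ 0) →
      SignRep (fun x => MvPolynomial.eval x P / MvPolynomial.eval x Q) parity →
      n + 1 ≤ P.totalDegree + Q.totalDegree)
    (A : Fin h → (Fin (n + 1) → ℝ) → Fin d → ℝ)
    (hA : ∀ j, IsAttentionHead (A j))
    (P Q : MvPolynomial (Fin d) ℝ)
    (hP : P.totalDegree ≤ p) (hQ : Q.totalDegree ≤ p)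
    (hQne : ∀ x ∈ cube (n + 1), MvPolynomial.eval (∑ j, A j x) Q ≠ 0)
    (T : (Fin (n + 1) → ℝ) → ℝ)
    (hT : ∀ x ∈ cube (n + 1),
      T x = MvPolynomial.eval (∑ j, A j x) P / MvPolynomial.eval (∑ j, A j x) Q)
    (hrep : SignRep T parity) :
    ((n : ℝ) + 1) / 4 ≤ (h : ℝ) * p := by
  have hsum : RatRepOn (cube (n + 1)) (h * 2) (∑ j, A j) := by
    simpa using RatRepOn.sum (t := Finset.univ) fun j _ => (hA j).ratRepOn_cube
  obtain ⟨P', Q', hP', hQ', hPQ'⟩ :=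
    hsum.exists_div_eq_comp_div hP hQ (by simpa only [Finset.sum_apply] using hQne)
  have hsign : SignRep (fun x => eval x P' / eval x Q') parity := fun x hx => by
    simpa only [(hPQ' x hx).2, Finset.sum_apply, ← hT x hx] using hrep x hx
  have hdeg : n + 1 ≤ 4 * (h * p) := by
    linarith [hPS P' Q' (fun x hx => (hPQ' x hx).1) hsign]
  rw [div_le_iff₀ four_pos]
  exact_mod_cast hdeg.trans_eq (mul_comm _ _)
end

section
/- Assume: (i) every self-attention layer with h heads post-processed by a rational function of degree at most p that sign-represents parity on n bits satisfies hp ≥ n/4; (ii) for every ε ∈ (0,1], every function u : [−1,1]ᵈ → ℝ computed by a normalized ReLU network of width m and depth ℓ admits a rational function v of degree at most (C/4)·m^ℓ·(ln(ℓ/ε))^{2ℓ} with sup-distance at most ε from u on [−1,1]ᵈ. Then, if T(x) = u(A₁(x)+⋯+A_h(x)) with head-sums in [−1,1]ᵈ (τ,γ)-represents parity with γ ∈ (0,1], it follows that h·m^ℓ·(ln(2ℓ/γ))^{2ℓ} ≥ n/C. -/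
open scoped Classical

/-- The box `[-1,1]ᵈ` inside `ℝᵈ`. -/
def box (d : ℕ) : Set (Fin d → ℝ) := {y | ∀ k, y k ∈ Set.Icc (-1 : ℝ) 1}

/-- A single normalized ReLU layer: each gate computes `z ↦ max 0 (aᵀz + b)`
with `‖a‖₁ + |b| ≤ 1`. -/
def IsReLULayer (k₁ k₂ : ℕ) (f : (Fin k₁ → ℝ) → Fin k₂ → ℝ) : Prop :=
  ∃ (a : Fin k₂ → Fin k₁ → ℝ) (b : Fin k₂ → ℝ),
    (∀ j, (∑ i, |a j i|) + |b j| ≤ 1) ∧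
    ∀ z j, f z j = max 0 ((∑ i, a j i * z i) + b j)

/-- `u` is computed by a normalized ReLU network of width `m` and depth `ℓ`
(with a final linear readout). -/
def IsReLUNet (m : ℕ) : (ℓ : ℕ) → (d : ℕ) → ((Fin d → ℝ) → ℝ) → Prop
  | 0, d, u => ∃ (a : Fin d → ℝ) (b : ℝ), ∀ z, u z = (∑ i, a i * z i) + b
  | ℓ + 1, d, u => ∃ k : ℕ, k ≤ m ∧ ∃ f : (Fin d → ℝ) → Fin k → ℝ,
      IsReLULayer d k f ∧ ∃ w : (Fin k → ℝ) → ℝ, IsReLUNet m ℓ k w ∧ ∀ z, u z = w (f z)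

/-!
Approximate `u` to within `γ / 2` on the box by a rational function `P / Q` of degree `p` given by
(ii). Since `T` stays `γ` away from the threshold `τ`, the rational function
`(P - τ Q) / Q = P / Q - τ` of the head-sum still sign-represents parity, so (i) yields
`(n + 1) / 4 ≤ h p`, and the degree bound of (ii) with `ln (ℓ / (γ / 2)) = ln (2ℓ / γ)` finishes.
-/

theorem pos_sub_iff_of_margin {X : Type*} {S : Set X} {g : X → Prop} {T R : X → ℝ}
    {τ γ ε : ℝ} (hε : ε < γ) (happrox : ∀ x ∈ S, |T x - R x| ≤ ε)
    (h1 : ∀ x ∈ S, g x → τ + γ ≤ T x) (h0 : ∀ x ∈ S, ¬ g x → T x ≤ τ - γ) :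
    ∀ x ∈ S, (0 < R x - τ ↔ g x) := by
  intro x hx
  obtain ⟨hlo, hhi⟩ := abs_le.mp (happrox x hx)
  by_cases hg : g x
  · exact iff_of_true (by linarith [h1 x hx hg]) hg
  · exact iff_of_false (by linarith [h0 x hx hg]) hg

theorem MvPolynomial.totalDegree_sub_C_mul_le {σ R : Type*} [CommRing R]
    {P Q : MvPolynomial σ R} {p : ℕ} (hP : P.totalDegree ≤ p) (hQ : Q.totalDegree ≤ p) (c : R) :
    (P - C c * Q).totalDegree ≤ p := by
  refine (totalDegree_sub P _).trans (max_le hP ?_)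
  calc (C c * Q).totalDegree ≤ (C c).totalDegree + Q.totalDegree := totalDegree_mul _ _
    _ ≤ p := by simpa [totalDegree_C] using hQ

theorem MvPolynomial.eval_sub_C_mul_div {σ K : Type*} [Field K] (P Q : MvPolynomial σ K)
    (c : K) {y : σ → K} (hQ : eval y Q ≠ 0) :
    eval y (P - C c * Q) / eval y Q = eval y P / eval y Q - c := by
  rw [map_sub, map_mul, eval_C]
  field_simp

theorem stmt_14 (C : ℝ) (hC : 0 < C) (n d h m ℓ : ℕ)
    -- (i) the rational-degree lower bound for sign-representing parity:
    (hi : ∀ (n' d' h' p' : ℕ) (A : Fin h' → (Fin (n' + 1) → ℝ) → Fin d' → ℝ),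
      (∀ j, IsAttentionHead (A j)) →
      ∀ P Q : MvPolynomial (Fin d') ℝ, P.totalDegree ≤ p' → Q.totalDegree ≤ p' →
      (∀ x ∈ cube (n' + 1), MvPolynomial.eval (∑ j, A j x) Q ≠ 0) →
      ∀ T : (Fin (n' + 1) → ℝ) → ℝ,
      (∀ x ∈ cube (n' + 1),
        T x = MvPolynomial.eval (∑ j, A j x) P / MvPolynomial.eval (∑ j, A j x) Q) →
      SignRep T parity → ((n' : ℝ) + 1) / 4 ≤ (h' : ℝ) * p')
    -- (ii) rational approximation of normalized ReLU networks:
    (hii : ∀ ε ∈ Set.Ioc (0 : ℝ) 1, ∀ (d' : ℕ) (u : (Fin d' → ℝ) → ℝ),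
      IsReLUNet m ℓ d' u →
      ∃ (p' : ℕ) (P Q : MvPolynomial (Fin d') ℝ),
        P.totalDegree ≤ p' ∧ Q.totalDegree ≤ p' ∧
        (p' : ℝ) ≤ C / 4 * (m : ℝ) ^ ℓ * (Real.log ((ℓ : ℝ) / ε)) ^ (2 * ℓ) ∧
        (∀ y ∈ box d', MvPolynomial.eval y Q ≠ 0) ∧
        ∀ y ∈ box d', |u y - MvPolynomial.eval y P / MvPolynomial.eval y Q| ≤ ε)
    (A : Fin h → (Fin (n + 1) → ℝ) → Fin d → ℝ)
    (hA : ∀ j, IsAttentionHead (A j))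
    (hbox : ∀ x ∈ cube (n + 1), (∑ j, A j x) ∈ box d)
    (u : (Fin d → ℝ) → ℝ) (hu : IsReLUNet m ℓ d u)
    (T : (Fin (n + 1) → ℝ) → ℝ) (hT : ∀ x, T x = u (∑ j, A j x))
    (τ γ : ℝ) (hγ : γ ∈ Set.Ioc (0 : ℝ) 1)
    (hrep1 : ∀ x ∈ cube (n + 1), parity x → τ + γ ≤ T x)
    (hrep0 : ∀ x ∈ cube (n + 1), ¬ parity x → T x ≤ τ - γ) :
    ((n : ℝ) + 1) / C ≤ (h : ℝ) * (m : ℝ) ^ ℓ * (Real.log (2 * (ℓ : ℝ) / γ)) ^ (2 * ℓ) := by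
  obtain ⟨hγ0, hγ1⟩ := hγ
  obtain ⟨p, P, Q, hP, hQ, hp, hQne, happrox⟩ :=
    hii (γ / 2) ⟨by linarith, by linarith⟩ d u hu
  have hQcube : ∀ x ∈ cube (n + 1), MvPolynomial.eval (∑ j, A j x) Q ≠ 0 :=
    fun x hx => hQne _ (hbox x hx)
  have hsign : SignRep (fun x => MvPolynomial.eval (∑ j, A j x) P /
      MvPolynomial.eval (∑ j, A j x) Q - τ) parity :=
    pos_sub_iff_of_margin (by linarith) (fun x hx => hT x ▸ happrox _ (hbox x hx)) hrep1 hrep0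
  have hlow : ((n : ℝ) + 1) / 4 ≤ h * p :=
    hi n d h p A hA (P - MvPolynomial.C τ * Q) Q (MvPolynomial.totalDegree_sub_C_mul_le hP hQ τ)
      hQ hQcube _ (fun x hx => (MvPolynomial.eval_sub_C_mul_div P Q τ (hQcube x hx)).symm) hsign
  rw [show (ℓ : ℝ) / (γ / 2) = 2 * ℓ / γ by field_simp] at hp
  have hhp := mul_le_mul_of_nonneg_left hp (Nat.cast_nonneg h : (0 : ℝ) ≤ h)
  rw [div_le_iff₀ hC]
  nlinarith
end

section
/- Suppose every degree-k polynomial threshold function on {0,1}ⁿ has average sensitivity at most s(k, n). Then for T a self-attention layer with h heads post-processed by a rational function of degree at most p (denominator nonzero on attained head-sums), the Boolean function sign(T) has average sensitivity at most s(4hp, n). -/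
open scoped Classical

/-- Embed Boolean vectors into `ℝⁿ`. -/
def toReal {n : ℕ} (x : Fin n → Bool) : Fin n → ℝ := fun i => if x i then 1 else 0

/-- Average sensitivity of a Boolean function: the expected number of coordinates
whose flip changes the value, under the uniform distribution. -/
noncomputable def avgSens {n : ℕ} (f : (Fin n → Bool) → Prop) : ℝ :=
  (∑ x : Fin n → Bool,
    ((Finset.univ.filter fun i => ¬ (f (Function.update x i (!x i)) ↔ f x)).card : ℝ))
    / 2 ^ n

/-- `f` is a polynomial threshold function of degree at most `k`. -/
def IsPTF {n : ℕ} (k : ℕ) (f : (Fin n → Bool) → Prop) : Prop :=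
  ∃ P : MvPolynomial (Fin n) ℝ, P.totalDegree ≤ k ∧
    ∀ x, (f x ↔ 0 < MvPolynomial.eval (toReal x) P)

/-!
Clearing denominators. On Boolean inputs each softmax head is a ratio `N / D` of polynomials of
degree `2` with `D > 0`, since every summand `exp ⟪q(x_last), k_i(x_i)⟫ v_i(x_i)` depends on
only two bits; so the sum of the `h` heads is `N / D` with `N, D` of degree `2h` and `D > 0`.
Then `D ^ p · P(N / D)` and `D ^ p · Q(N / D)` are polynomials of degree `2hp`, and
`sign (P / Q) = sign ((D ^ p P) (D ^ p Q))`, a threshold of a polynomial of degree `4hp`.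
-/

open MvPolynomial Finset

lemma pow_mul_prod_div_pow_s19 {σ K : Type*} [Fintype σ] [Field K] (N : σ → K) {D : K} (hD : D ≠ 0)
    (m : σ →₀ ℕ) {p : ℕ} (hm : ∑ c, m c ≤ p) :
    D ^ p * ∏ c, (N c / D) ^ m c = (∏ c, N c ^ m c) * D ^ (p - ∑ c, m c) := by
  rw [← Nat.sub_add_cancel hm, pow_add]
  simp_rw [div_pow]
  rw [prod_div_distrib, prod_pow_eq_pow_sum, Nat.add_sub_cancel]
  field_simp

def IsPolyOnCube {n : ℕ} (k : ℕ) (g : (Fin n → Bool) → ℝ) : Prop :=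
  ∃ R : MvPolynomial (Fin n) ℝ, R.totalDegree ≤ k ∧ ∀ x, g x = eval (toReal x) R

namespace IsPolyOnCube

variable {n k l : ℕ} {f g : (Fin n → Bool) → ℝ}

lemma mono (hkl : k ≤ l) (hf : IsPolyOnCube k f) : IsPolyOnCube l f :=
  let ⟨R, hR, he⟩ := hf; ⟨R, hR.trans hkl, he⟩

lemma congr (hf : IsPolyOnCube k f) (hfg : ∀ x, f x = g x) : IsPolyOnCube k g :=
  let ⟨R, hR, he⟩ := hf; ⟨R, hR, fun x => (hfg x).symm.trans (he x)⟩

lemma const (c : ℝ) : IsPolyOnCube (n := n) 0 fun _ => c :=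
  ⟨C c, by simp, fun x => by simp⟩

lemma add (hf : IsPolyOnCube k f) (hg : IsPolyOnCube k g) :
    IsPolyOnCube k fun x => f x + g x := by
  obtain ⟨R, hR, he⟩ := hf
  obtain ⟨R', hR', he'⟩ := hg
  exact ⟨R + R', (totalDegree_add R R').trans (max_le hR hR'), fun x => by simp [he x, he' x]⟩

lemma mul (hf : IsPolyOnCube k f) (hg : IsPolyOnCube l g) :
    IsPolyOnCube (k + l) fun x => f x * g x := by
  obtain ⟨R, hR, he⟩ := hf
  obtain ⟨R', hR', he'⟩ := hg
  exact ⟨R * R', (totalDegree_mul R R').trans (add_le_add hR hR'), fun x => by simp [he x, he' x]⟩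

lemma sum {ι : Type*} (s : Finset ι) {f : ι → (Fin n → Bool) → ℝ}
    (hf : ∀ j ∈ s, IsPolyOnCube k (f j)) : IsPolyOnCube k fun x => ∑ j ∈ s, f j x := by
  induction s using Finset.cons_induction with
  | empty => exact ((const 0).mono k.zero_le).congr fun x => by simp
  | cons a s ha ih =>
    exact ((hf a (mem_cons_self a s)).add (ih fun j hj => hf j (mem_cons_of_mem hj))).congr
      fun x => (sum_cons (f := (f · x)) ha).symm

lemma prod {ι : Type*} (s : Finset ι) {e : ι → ℕ} {f : ι → (Fin n → Bool) → ℝ}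
    (hf : ∀ j ∈ s, IsPolyOnCube (e j) (f j)) :
    IsPolyOnCube (∑ j ∈ s, e j) fun x => ∏ j ∈ s, f j x := by
  induction s using Finset.cons_induction with
  | empty => exact (const 1).congr fun x => by simp
  | cons a s ha ih =>
    rw [sum_cons]
    exact ((hf a (mem_cons_self a s)).mul (ih fun j hj => hf j (mem_cons_of_mem hj))).congr
      fun x => (prod_cons (f := (f · x)) ha).symm

lemma pow (hf : IsPolyOnCube k f) (m : ℕ) : IsPolyOnCube (m * k) fun x => f x ^ m := by
  simpa using prod (range m) (e := fun _ => k) fun _ _ => hf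

lemma of_bool (i : Fin n) (F : Bool → ℝ) : IsPolyOnCube 1 fun x => F (x i) :=
  ⟨C (F false) + C (F true - F false) * X i,
    (totalDegree_add _ _).trans (max_le ((totalDegree_C _).trans_le zero_le_one)
      ((totalDegree_mul _ _).trans (by rw [totalDegree_C, totalDegree_X]))),
    fun x => by cases hx : x i <;> simp [toReal, hx]⟩

lemma of_bool₂ (i j : Fin n) (F : Bool → Bool → ℝ) : IsPolyOnCube 2 fun x => F (x i) (x j) := by
  have hT := (of_bool i fun b => if b then 1 else 0).mul (of_bool j (F true))
  have hF := (of_bool i fun b => if b then 0 else 1).mul (of_bool j (F false))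
  exact (hT.add hF).congr fun x => by cases x i <;> simp

/-- `D ^ p · P (N / D)` is the homogenization of `P` evaluated at `(N, D)`. -/
lemma pow_mul_eval_div {σ : Type*} [Fintype σ] {p : ℕ} (P : MvPolynomial σ ℝ)
    (hP : P.totalDegree ≤ p) {N : σ → (Fin n → Bool) → ℝ} {D : (Fin n → Bool) → ℝ}
    (hN : ∀ c, IsPolyOnCube k (N c)) (hD : IsPolyOnCube k D) (hD0 : ∀ x, D x ≠ 0) :
    IsPolyOnCube (p * k) fun x => D x ^ p * eval (fun c => N c x / D x) P := by
  have hdeg : ∀ m ∈ P.support, ∑ c, m c ≤ p := fun m hm => by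
    rw [← Finsupp.degree_eq_sum]
    exact (le_totalDegree hm).trans hP
  refine (sum P.support (f := fun m x => P.coeff m * ((∏ c, N c x ^ m c) * D x ^ (p - ∑ c, m c)))
    fun m hm => ?_).congr fun x => ?_
  · have hterm := (const (P.coeff m)).mul
      ((prod univ fun c _ => (hN c).pow (m c)).mul (hD.pow (p - ∑ c, m c)))
    refine hterm.mono (le_of_eq ?_)
    rw [zero_add, ← sum_mul, ← add_mul, Nat.add_sub_cancel' (hdeg m hm)]
  · rw [eval_eq', mul_sum]
    refine sum_congr rfl fun m hm => ?_
    rw [mul_left_comm (D x ^ p), pow_mul_prod_div_pow_s19 _ (hD0 x) m (hdeg m hm)]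

end IsPolyOnCube

lemma IsPTF.of_isPolyOnCube {n k : ℕ} {f : (Fin n → Bool) → Prop} {g : (Fin n → Bool) → ℝ}
    (hg : IsPolyOnCube k g) (hfg : ∀ x, f x ↔ 0 < g x) : IsPTF k f :=
  let ⟨R, hR, he⟩ := hg; ⟨R, hR, fun x => (hfg x).trans (by rw [he x])⟩

def IsRatOnCube {n : ℕ} {ι : Type*} (k : ℕ) (g : ι → (Fin n → Bool) → ℝ) : Prop :=
  ∃ (N : ι → (Fin n → Bool) → ℝ) (D : (Fin n → Bool) → ℝ),
    (∀ i, IsPolyOnCube k (N i)) ∧ IsPolyOnCube k D ∧ (∀ x, 0 < D x) ∧ ∀ i x, g i x = N i x / D x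

namespace IsRatOnCube

variable {n k l : ℕ} {ι : Type*} {f g : ι → (Fin n → Bool) → ℝ}

lemma zero : IsRatOnCube (n := n) (ι := ι) 0 0 :=
  ⟨0, fun _ => 1, fun _ => (IsPolyOnCube.const 0).congr fun _ => rfl, IsPolyOnCube.const 1,
    fun _ => one_pos, fun _ _ => by simp⟩

lemma add (hf : IsRatOnCube k f) (hg : IsRatOnCube l g) : IsRatOnCube (k + l) (f + g) := by
  obtain ⟨N, D, hN, hD, hDpos, hfe⟩ := hf
  obtain ⟨N', D', hN', hD', hD'pos, hge⟩ := hg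
  refine ⟨fun i x => N i x * D' x + N' i x * D x, fun x => D x * D' x,
    fun i => ((hN i).mul hD').add (add_comm l k ▸ (hN' i).mul hD), hD.mul hD',
    fun x => mul_pos (hDpos x) (hD'pos x), fun i x => ?_⟩
  rw [Pi.add_apply, Pi.add_apply, hfe, hge]
  field_simp [(hDpos x).ne', (hD'pos x).ne']

lemma sum {κ : Type*} (s : Finset κ) {f : κ → ι → (Fin n → Bool) → ℝ}
    (hf : ∀ j ∈ s, IsRatOnCube k (f j)) : IsRatOnCube (#s * k) (∑ j ∈ s, f j) := by
  induction s using Finset.cons_induction with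
  | empty => simpa using zero
  | cons a s ha ih =>
    rw [sum_cons, card_cons, add_mul, one_mul, add_comm _ k]
    exact (hf a (mem_cons_self a s)).add (ih fun j hj => hf j (mem_cons_of_mem hj))

end IsRatOnCube

lemma IsAttentionHead.isRatOnCube {n d : ℕ} {A : (Fin (n + 1) → ℝ) → Fin d → ℝ}
    (hA : IsAttentionHead A) : IsRatOnCube 2 fun c x => A (toReal x) c := by
  obtain ⟨H, _, _, q, kf, v, hAe⟩ := hA
  let w (i : Fin (n + 1)) (a b : Bool) : ℝ :=
    Real.exp (inner ℝ (q (if a then 1 else 0)) (kf i (if b then 1 else 0)))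
  refine ⟨fun c x => ∑ i, w i (x (Fin.last n)) (x i) * v i (if x i then 1 else 0) c,
    fun x => ∑ i, w i (x (Fin.last n)) (x i), fun c => ?_, ?_,
    fun x => sum_pos (fun i _ => Real.exp_pos _) univ_nonempty, fun c x => hAe (toReal x) c⟩
  · exact IsPolyOnCube.sum univ fun i _ =>
      IsPolyOnCube.of_bool₂ (Fin.last n) i fun a b => w i a b * v i (if b then 1 else 0) c
  · exact IsPolyOnCube.sum univ fun i _ => IsPolyOnCube.of_bool₂ (Fin.last n) i (w i)

lemma toReal_mem_cube {n : ℕ} (x : Fin n → Bool) : toReal x ∈ cube n := fun i => by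
  cases hx : x i <;> simp [toReal, hx]

lemma pos_div_iff_pos_mul_mul {K : Type*} [Field K] [LinearOrder K] [IsStrictOrderedRing K]
    {a b c : K} (hc : c ≠ 0) : 0 < a / b ↔ 0 < c * a * (c * b) := by
  rw [show c * a * (c * b) = c ^ 2 * (a * b) by ring, mul_pos_iff_of_pos_left (by positivity),
    div_pos_iff, mul_pos_iff]

theorem stmt_19_general (n d h p : ℕ) (s : ℕ → ℕ → ℝ)
    -- every degree-`k` PTF on `n+1` bits has average sensitivity at most `s k (n+1)`:
    (hs : ∀ (k : ℕ) (f : (Fin (n + 1) → Bool) → Prop), IsPTF k f → avgSens f ≤ s k (n + 1))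
    (A : Fin h → (Fin (n + 1) → ℝ) → Fin d → ℝ)
    (hA : ∀ j, IsAttentionHead (A j))
    (P Q : MvPolynomial (Fin d) ℝ)
    (hP : P.totalDegree ≤ p) (hQ : Q.totalDegree ≤ p)
    (T : (Fin (n + 1) → ℝ) → ℝ)
    (hT : ∀ x ∈ cube (n + 1),
      T x = MvPolynomial.eval (∑ j, A j x) P / MvPolynomial.eval (∑ j, A j x) Q) :
    avgSens (fun x : Fin (n + 1) → Bool => 0 < T (toReal x)) ≤ s (4 * h * p) (n + 1) := by
  have hsum : IsRatOnCube (2 * h) fun c x => (∑ j, A j (toReal x)) c := by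
    simpa [mul_comm, Finset.sum_fn] using IsRatOnCube.sum univ fun j _ => (hA j).isRatOnCube
  obtain ⟨N, D, hN, hD, hDpos, hsumND⟩ := hsum
  have hD0 : ∀ x, D x ≠ 0 := fun x => (hDpos x).ne'
  have hPD := IsPolyOnCube.pow_mul_eval_div P hP hN hD hD0
  have hQD := IsPolyOnCube.pow_mul_eval_div Q hQ hN hD hD0
  refine hs _ _ (IsPTF.of_isPolyOnCube ((hPD.mul hQD).mono (le_of_eq (by ring))) fun x => ?_)
  have hval : ∑ j, A j (toReal x) = fun c => N c x / D x := funext fun c => hsumND c x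
  rw [hT _ (toReal_mem_cube x), hval]
  exact pos_div_iff_pos_mul_mul (pow_ne_zero p (hD0 x))

theorem stmt_19 (n d h p : ℕ) (s : ℕ → ℕ → ℝ)
    -- every degree-`k` PTF on `n+1` bits has average sensitivity at most `s k (n+1)`:
    (hs : ∀ (k : ℕ) (f : (Fin (n + 1) → Bool) → Prop), IsPTF k f → avgSens f ≤ s k (n + 1))
    (A : Fin h → (Fin (n + 1) → ℝ) → Fin d → ℝ)
    (hA : ∀ j, IsAttentionHead (A j))
    (P Q : MvPolynomial (Fin d) ℝ)
    (hP : P.totalDegree ≤ p) (hQ : Q.totalDegree ≤ p)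
    (hQne : ∀ x ∈ cube (n + 1), MvPolynomial.eval (∑ j, A j x) Q ≠ 0)
    (T : (Fin (n + 1) → ℝ) → ℝ)
    (hT : ∀ x ∈ cube (n + 1),
      T x = MvPolynomial.eval (∑ j, A j x) P / MvPolynomial.eval (∑ j, A j x) Q) :
    avgSens (fun x : Fin (n + 1) → Bool => 0 < T (toReal x)) ≤ s (4 * h * p) (n + 1) :=
  stmt_19_general n d h p s hs A hA P Q hP hQ T hT
end
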